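/- arXiv:2311.08404 — 7 statements merged into one kernel-verified Lean document; each statement's English description precedes it below -/
import Mathlib

section
/- Let R be an associative ring with identity and let e be an idempotent of R (e² = e). If e does not lie in the center of R, then R contains an idempotent e' distinct from e such that either (ee' = e and e'e = e') or (ee' = e' and e'e = e). -/
theorem stmt_0 {R : Type*} [Ring R] (e : R) (he : e ^ 2 = e)
    (hne : ¬ ∀ x : R, e * x = x * e) :
    ∃ e' : R, e' ^ 2 = e' ∧ e' ≠ e ∧
      ((e * e' = e ∧ e' * e = e') ∨ (e * e' = e' ∧ e' * e = e)) := by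
  push_neg at hne
  obtain ⟨x, hx⟩ := hne
  have he' : e * e = e := by rw [← sq]; exact he
  by_cases h : e * x = e * x * e
  · -- then x*e ≠ e*x*e; take e' = e + x*e - e*x*e
    refine ⟨e + x * e - e * x * e, ?_, ?_, Or.inl ⟨?_, ?_⟩⟩
    · rw [sq]
      have key : (x * e - e * x * e) * (x * e - e * x * e) = 0 := by
        have hz : e * (x * e - e * x * e) = 0 := by
          simp [mul_sub, ← mul_assoc, he']
        calc (x * e - e * x * e) * (x * e - e * x * e)
            = (x - e * x) * (e * (x * e - e * x * e)) := by noncomm_ring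
          _ = 0 := by rw [hz]; simp
      have expand : (e + (x * e - e * x * e)) * (e + (x * e - e * x * e)) =
          e * e + e * (x * e - e * x * e) + (x * e - e * x * e) * e +
          (x * e - e * x * e) * (x * e - e * x * e) := by noncomm_ring
      have h2 : e * (x * e - e * x * e) = 0 := by
        simp [mul_sub, ← mul_assoc, he']
      have h3 : (x * e - e * x * e) * e = x * e - e * x * e := by
        simp [sub_mul, mul_assoc, he']
      calc (e + x * e - e * x * e) * (e + x * e - e * x * e)
          = (e + (x * e - e * x * e)) * (e + (x * e - e * x * e)) := by noncomm_ring
        _ = e * e + e * (x * e - e * x * e) + (x * e - e * x * e) * e +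
            (x * e - e * x * e) * (x * e - e * x * e) := expand
        _ = e + x * e - e * x * e := by rw [he', h2, h3, key]; abel
    · intro hc
      rw [add_sub_assoc] at hc
      have h4 : x * e - e * x * e = 0 := add_eq_left.mp hc
      have h5 : x * e = e * x * e := sub_eq_zero.mp h4
      exact hx (by rw [h, ← h5])
    · have h2 : e * (x * e - e * x * e) = 0 := by
        simp [mul_sub, ← mul_assoc, he']
      calc e * (e + x * e - e * x * e) = e * e + e * (x * e - e * x * e) := by noncomm_ring
        _ = e := by rw [he', h2]; abel
    · have h3 : (x * e - e * x * e) * e = x * e - e * x * e := by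
        simp [sub_mul, mul_assoc, he']
      calc (e + x * e - e * x * e) * e = e * e + (x * e - e * x * e) * e := by noncomm_ring
        _ = e + x * e - e * x * e := by rw [he', h3]; abel
  · -- e*x ≠ e*x*e; take e' = e + e*x - e*x*e
    refine ⟨e + e * x - e * x * e, ?_, ?_, Or.inr ⟨?_, ?_⟩⟩
    · rw [sq]
      have key : (e * x - e * x * e) * (e * x - e * x * e) = 0 := by
        have h5 : (e * x - e * x * e) * e = 0 := by
          simp [sub_mul, mul_assoc, he']
        calc (e * x - e * x * e) * (e * x - e * x * e)
            = ((e * x - e * x * e) * e) * (x * (1 - e)) := by noncomm_ring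
          _ = 0 := by rw [h5]; simp
      have h2 : e * (e * x - e * x * e) = e * x - e * x * e := by
        simp [mul_sub, ← mul_assoc, he']
      have h5 : (e * x - e * x * e) * e = 0 := by
        simp [sub_mul, mul_assoc, he']
      calc (e + e * x - e * x * e) * (e + e * x - e * x * e)
          = e * e + e * (e * x - e * x * e) + (e * x - e * x * e) * e +
            (e * x - e * x * e) * (e * x - e * x * e) := by noncomm_ring
        _ = e + e * x - e * x * e := by rw [he', h2, h5, key]; abel
    · intro hc
      apply h
      rw [add_sub_assoc] at hc
      have h4 : e * x - e * x * e = 0 := add_eq_left.mp hc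
      exact sub_eq_zero.mp h4
    · have h2 : e * (e * x - e * x * e) = e * x - e * x * e := by
        simp [mul_sub, ← mul_assoc, he']
      calc e * (e + e * x - e * x * e) = e * e + e * (e * x - e * x * e) := by noncomm_ring
        _ = e + e * x - e * x * e := by rw [he', h2]; abel
    · have h5 : (e * x - e * x * e) * e = 0 := by
        simp [sub_mul, mul_assoc, he']
      calc (e + e * x - e * x * e) * e = e * e + (e * x - e * x * e) * e := by noncomm_ring
        _ = e := by rw [he', h5]; abel
end

section
/- Let R be an associative ring with identity and let e be an idempotent of R. If e commutes with every idempotent of R (ef = fe for all f ∈ R with f² = f), then e lies in the center of R. -/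
theorem stmt_1 {R : Type*} [Ring R] (e : R) (he : e ^ 2 = e)
    (h : ∀ f : R, f ^ 2 = f → e * f = f * e) :
    ∀ x : R, e * x = x * e := by
  have he2 : e * e = e := by rw [← sq]; exact he
  intro x
  -- f = e + e*x - e*x*e
  have ha : e * (e + e*x - e*x*e) = e + e*x - e*x*e := by
    simp only [mul_add, mul_sub, ← mul_assoc, he2]
  have hb : (e + e*x - e*x*e) * e = e := by
    simp only [add_mul, sub_mul, mul_assoc, he2]
    abel
  have hf : (e + e*x - e*x*e) ^ 2 = e + e*x - e*x*e := by
    rw [sq]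
    nth_rewrite 2 [← ha]
    rw [← mul_assoc, hb, ha]
  have hfe : e + e*x - e*x*e = e := by rw [← ha, h _ hf, hb]
  have e1 : e * x = e * x * e := by
    rwa [add_sub_assoc, add_eq_left, sub_eq_zero] at hfe
  -- g = e + x*e - e*x*e
  have hc : e * (e + x*e - e*x*e) = e := by
    simp only [mul_add, mul_sub, ← mul_assoc, he2]
    abel
  have hd : (e + x*e - e*x*e) * e = e + x*e - e*x*e := by
    simp only [add_mul, sub_mul, mul_assoc, he2]
  have hg : (e + x*e - e*x*e) ^ 2 = e + x*e - e*x*e := by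
    rw [sq]
    nth_rewrite 1 [← hd]
    rw [mul_assoc, hc, hd]
  have hge : e + x*e - e*x*e = e := by rw [← hd, ← h _ hg, hc]
  have e2 : x * e = e * x * e := by
    rwa [add_sub_assoc, add_eq_left, sub_eq_zero] at hge
  rw [e1, e2]
end

section
/- Let R be an associative ring with identity and let e, e' be idempotents of R. Then the following are equivalent: (1) ee' = e and e'e = e'; (2) for every idempotent f of R, ef = 0 if and only if e'f = 0 (that is, e and e' have the same out-neighbours in the directed graph γ(R) on idempotents with an edge x → y iff xy = 0). -/
theorem stmt_6 {R : Type*} [Ring R] (e e' : R) (he : e ^ 2 = e) (he' : e' ^ 2 = e') :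
    (e * e' = e ∧ e' * e = e') ↔
      (∀ f : R, f ^ 2 = f → (e * f = 0 ↔ e' * f = 0)) := by
  simp only [sq] at he he'
  constructor
  · rintro ⟨h1, h2⟩ f _
    constructor
    · intro hf
      calc e' * f = e' * (e * f) := by rw [← mul_assoc, h2]
        _ = 0 := by rw [hf, mul_zero]
    · intro hf
      calc e * f = e * (e' * f) := by rw [← mul_assoc, h1]
        _ = 0 := by rw [hf, mul_zero]
  · intro h
    have h1 := h (1 - e') (by rw [sq, mul_sub, sub_mul, sub_mul, one_mul, mul_one, he']; noncomm_ring)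
    have h2 := h (1 - e) (by rw [sq, mul_sub, sub_mul, sub_mul, one_mul, mul_one, he]; noncomm_ring)
    have he2 : e * (1 - e) = 0 := by rw [mul_sub, mul_one, he, sub_self]
    have he2' : e' * (1 - e') = 0 := by rw [mul_sub, mul_one, he', sub_self]
    constructor
    · have := h1.mpr he2'
      rw [mul_sub, mul_one, sub_eq_zero] at this
      exact this.symm
    · have := h2.mp he2
      rw [mul_sub, mul_one, sub_eq_zero] at this
      exact this.symm
end

section
/- Let R be an associative ring with identity and let e, e' be idempotents of R. Then the following are equivalent: (1) ee' = e' and e'e = e; (2) for every idempotent f of R, fe = 0 if and only if fe' = 0 (that is, e and e' have the same in-neighbours in the directed graph γ(R) on idempotents with an edge x → y iff xy = 0). -/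
theorem stmt_7 {R : Type*} [Ring R] (e e' : R) (he : e ^ 2 = e) (he' : e' ^ 2 = e') :
    (e * e' = e' ∧ e' * e = e) ↔
      (∀ f : R, f ^ 2 = f → (f * e = 0 ↔ f * e' = 0)) := by
  constructor
  · rintro ⟨h1, h2⟩ f _
    constructor
    · intro hf
      have : f * e' = f * e * e' := by rw [mul_assoc, h1]
      rw [this, hf, zero_mul]
    · intro hf
      have : f * e = f * e' * e := by rw [mul_assoc, h2]
      rw [this, hf, zero_mul]
  · intro h
    have h1 : (1 - e) * e' = 0 := by
      refine (h (1 - e) ?_).mp ?_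
      · rw [sq, mul_sub, sub_mul, sub_mul, one_mul, mul_one, ← sq, he]; simp
      · rw [sub_mul, one_mul, ← sq, he, sub_self]
    have h2 : (1 - e') * e = 0 := by
      refine (h (1 - e') ?_).mpr ?_
      · rw [sq, mul_sub, sub_mul, sub_mul, one_mul, mul_one, ← sq, he']; simp
      · rw [sub_mul, one_mul, ← sq, he', sub_self]
    constructor
    · have := h1; rw [sub_mul, one_mul, sub_eq_zero] at this; exact this.symm
    · have := h2; rw [sub_mul, one_mul, sub_eq_zero] at this; exact this.symm
end

section
/- Let R be a finite associative algebra with identity over the finite field 𝔽_q, and let e be an idempotent of R. Then the cardinality of the set 𝒪ₑ = {x ∈ R : ex = e and xe = x} equals q^k for some integer k ≥ 0. -/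
theorem stmt_14 {F : Type*} [Field F] [Fintype F] {R : Type*} [Ring R] [Algebra F R]
    [Fintype R] (e : R) (he : e ^ 2 = e) :
    ∃ k : ℕ, Nat.card {x : R | e * x = e ∧ x * e = x} = (Fintype.card F) ^ k := by
  have hee : e * e = e := by rw [← sq]; exact he
  set V : Submodule F R :=
    { carrier := {y | e * y = 0 ∧ y * e = y}
      add_mem' := fun {a b} ha hb => by
        simp only [Set.mem_setOf_eq, mul_add, add_mul] at *
        rw [ha.1, hb.1, ha.2, hb.2]; simp
      zero_mem' := by simp
      smul_mem' := fun c y hy => by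
        simp only [Set.mem_setOf_eq, mul_smul_comm, smul_mul_assoc] at *
        rw [hy.1, hy.2]; simp } with hV
  have equiv : {x : R | e * x = e ∧ x * e = x} ≃ V :=
    { toFun := fun x => ⟨x.1 - e, by
        constructor
        · rw [mul_sub, x.2.1, hee, sub_self]
        · rw [sub_mul, x.2.2, hee]⟩
      invFun := fun y => ⟨y.1 + e, by
        constructor
        · rw [mul_add, y.2.1, hee, zero_add]
        · rw [add_mul, y.2.2, hee]⟩
      left_inv := fun x => by simp
      right_inv := fun y => by simp }
  have : Fintype V := Fintype.ofFinite V
  rw [Nat.card_congr equiv, Nat.card_eq_fintype_card]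
  exact ⟨Module.finrank F V, Module.card_eq_pow_finrank⟩
end

section
/- Let R be a finite associative algebra with identity over the finite field 𝔽_q, and let e be an idempotent of R. Then the cardinality of the set ℐₑ = {x ∈ R : ex = x and xe = e} equals q^k for some integer k ≥ 0. -/
theorem stmt_15 {F : Type*} [Field F] [Fintype F] {R : Type*} [Ring R] [Algebra F R]
    [Fintype R] (e : R) (he : e ^ 2 = e) :
    ∃ k : ℕ, Nat.card {x : R | e * x = x ∧ x * e = e} = (Fintype.card F) ^ k := by
  classical
  have he' : e * e = e := by rw [← pow_two]; exact he
  let V : Submodule F R :=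
    { carrier := {n | e * n = n ∧ n * e = 0}
      add_mem' := by
        rintro a b ⟨ha1, ha2⟩ ⟨hb1, hb2⟩
        exact ⟨by rw [mul_add, ha1, hb1], by rw [add_mul, ha2, hb2, add_zero]⟩
      zero_mem' := ⟨mul_zero e, zero_mul e⟩
      smul_mem' := by
        rintro c a ⟨ha1, ha2⟩
        exact ⟨by rw [mul_smul_comm, ha1], by rw [smul_mul_assoc, ha2, smul_zero]⟩ }
  have hequiv : {x : R | e * x = x ∧ x * e = e} ≃ V :=
    { toFun := fun x => ⟨x.1 - e, by
        obtain ⟨h1, h2⟩ := x.2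
        exact ⟨by rw [mul_sub, h1, he'], by rw [sub_mul, h2, he', sub_self]⟩⟩
      invFun := fun n => ⟨n.1 + e, by
        obtain ⟨h1, h2⟩ := n.2
        exact ⟨by rw [mul_add, h1, he'], by rw [add_mul, h2, he', zero_add]⟩⟩
      left_inv := fun x => by simp
      right_inv := fun n => by simp }
  refine ⟨Module.finrank F V, ?_⟩
  rw [Nat.card_congr hequiv, Nat.card_eq_fintype_card, Module.card_eq_pow_finrank (K := F)]
end

section
/- Let R be an associative ring with identity and let e be an idempotent of R that does not lie in the center of R. Then at least one of the sets 𝒪ₑ = {x ∈ R : ex = e and xe = x} and ℐₑ = {x ∈ R : ex = x and xe = e} contains an element different from e. -/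
theorem stmt_16 {R : Type*} [Ring R] (e : R) (he : e ^ 2 = e)
    (hne : ¬ ∀ x : R, e * x = x * e) :
    (∃ x : R, x ≠ e ∧ e * x = e ∧ x * e = x) ∨
      (∃ x : R, x ≠ e ∧ e * x = x ∧ x * e = e) := by
  push_neg at hne
  obtain ⟨x, hx⟩ := hne
  rw [sq] at he
  have hz : e * e - e = 0 := by rw [he, sub_self]
  by_cases h1 : e * x * (1 - e) = 0
  · by_cases h2 : (1 - e) * (x * e) = 0
    · exfalso
      apply hx
      have h1' : e * x - e * x * e = 0 := by
        rw [← h1]; noncomm_ring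
      have h2' : e * (x * e) - x * e = 0 := by
        rw [← neg_eq_zero, ← h2]; noncomm_ring
      have := sub_eq_zero.mp h1'
      rw [this, mul_assoc]
      exact sub_eq_zero.mp h2'
    · left
      refine ⟨e + (1 - e) * (x * e), ?_, ?_, ?_⟩
      · intro h
        apply h2
        have : e + (1 - e) * (x * e) - e = 0 := by rw [h, sub_self]
        exact (by simpa using this : (1 - e) * (x * e) = 0)
      · have key : e * (e + (1 - e) * (x * e)) - e = (e * e - e) * (1 - x * e) := by
          noncomm_ring
        rw [hz, zero_mul] at key
        exact sub_eq_zero.mp key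
      · have key : (e + (1 - e) * (x * e)) * e - (e + (1 - e) * (x * e)) =
            (1 + (1 - e) * x) * (e * e - e) := by noncomm_ring
        rw [hz, mul_zero] at key
        exact sub_eq_zero.mp key
  · right
    refine ⟨e + e * x * (1 - e), ?_, ?_, ?_⟩
    · intro h
      apply h1
      have : e + e * x * (1 - e) - e = 0 := by rw [h, sub_self]
      simpa using this
    · have key : e * (e + e * x * (1 - e)) - (e + e * x * (1 - e)) =
          (e * e - e) * (1 + x * (1 - e)) := by noncomm_ring
      rw [hz, zero_mul] at key
      exact sub_eq_zero.mp key
    · have key : (e + e * x * (1 - e)) * e - e = (1 - e * x) * (e * e - e) := by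
        noncomm_ring
      rw [hz, mul_zero] at key
      exact sub_eq_zero.mp key
end
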